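/- arXiv:1007.3098 — 6 statements merged into one kernel-verified Lean document; each statement's English description precedes it below -/
import Mathlib

section
/- (von Neumann trace inequality) Let A and B be two n×n real matrices with singular values σ_1(A) ≥ σ_2(A) ≥ … ≥ σ_n(A) and σ_1(B) ≥ σ_2(B) ≥ … ≥ σ_n(B), respectively. Then |Tr(AB)| ≤ Σ_{i=1}^n σ_i(A) σ_i(B). -/
/-!
Writing `A = U₁ diag(σA) V₁ᵀ` and `B = U₂ diag(σB) V₂ᵀ`, cyclicity of the trace gives
`Tr(AB) = ∑ i j, σA i * P i j * σB j * Q j i` with `P = V₁ᵀ U₂` and `Q = V₂ᵀ U₁` orthogonal.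
By AM-GM, `|P i j * Q j i| ≤ T i j := (P i j ^ 2 + Q j i ^ 2) / 2`, and `T` is doubly stochastic
because the rows and columns of an orthogonal matrix are unit vectors. By Birkhoff's theorem the
linear form `T ↦ σA ⬝ᵥ T *ᵥ σB` is maximised over doubly stochastic matrices at a permutation
matrix, where the rearrangement inequality bounds it by `σA ⬝ᵥ σB`.
-/

open Matrix

/-- `(U, σ, V)` is a (reduced) singular value decomposition of the real `n × m` matrix `B`:
`U` and `V` have orthonormal columns, `σ` is a nonincreasing list of nonnegative reals
(the singular values of `B`), and `B = U diag(σ) Vᵀ`. -/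
def IsSVD {n m k : ℕ} (B : Matrix (Fin n) (Fin m) ℝ) (U : Matrix (Fin n) (Fin k) ℝ)
    (σ : Fin k → ℝ) (V : Matrix (Fin m) (Fin k) ℝ) : Prop :=
  Uᵀ * U = 1 ∧ Vᵀ * V = 1 ∧ Antitone σ ∧ (∀ i, 0 ≤ σ i) ∧ B = U * diagonal σ * Vᵀ

namespace Matrix

variable {ι : Type*} [Fintype ι] [DecidableEq ι]

theorem _root_.Monovary.dotProduct_mulVec_le_of_mem_doublyStochastic {a b : ι → ℝ}
    (hab : Monovary a b) {M : Matrix ι ι ℝ} (hM : M ∈ doublyStochastic ℝ ι) :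
    a ⬝ᵥ M *ᵥ b ≤ a ⬝ᵥ b := by
  rw [← SetLike.mem_coe, doublyStochastic_eq_convexHull_permMatrix] at hM
  have hconvex : ConvexOn ℝ Set.univ fun M : Matrix ι ι ℝ => a ⬝ᵥ M *ᵥ b :=
    ⟨convex_univ, fun _ _ _ _ _ _ _ _ _ => le_of_eq <| by
      simp only [add_mulVec, smul_mulVec, dotProduct_add, dotProduct_smul, smul_eq_mul]⟩
  obtain ⟨_, ⟨σ, rfl⟩, hσ⟩ := hconvex.exists_ge_of_mem_convexHull (by simp) hM
  refine hσ.trans ?_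
  simpa [permMatrix_mulVec, dotProduct] using hab.sum_mul_comp_perm_le_sum_mul

theorem hadamard_self_mem_doublyStochastic {U : Matrix ι ι ℝ}
    (hU : U ∈ orthogonalGroup ι ℝ) : U ⊙ U ∈ doublyStochastic ℝ ι := by
  refine mem_doublyStochastic_iff_sum.mpr ⟨fun i j => mul_self_nonneg _, fun i => ?_, fun j => ?_⟩
  · simpa [mul_apply] using congrFun₂ ((mem_orthogonalGroup_iff _ _).mp hU) i i
  · simpa [mul_apply] using congrFun₂ ((mem_orthogonalGroup_iff' _ _).mp hU) j j

theorem trace_diagonal_mul_mul_diagonal_mul {R : Type*} [CommSemiring R] (a b : ι → R)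
    (P Q : Matrix ι ι R) :
    trace (diagonal a * P * diagonal b * Q) = ∑ i, ∑ j, a i * P i j * b j * Q j i := by
  refine Finset.sum_congr rfl fun i _ => ?_
  simp only [diag_apply, mul_apply (M := _ * diagonal b), mul_diagonal, diagonal_mul]

theorem transpose_mul_mem_orthogonalGroup {U V : Matrix ι ι ℝ}
    (hU : Uᵀ * U = 1) (hV : Vᵀ * V = 1) : Uᵀ * V ∈ orthogonalGroup ι ℝ :=
  mul_mem (Unitary.star_mem ((mem_orthogonalGroup_iff' _ _).mpr hU))
    ((mem_orthogonalGroup_iff' _ _).mpr hV)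

theorem abs_trace_diagonal_mul_mul_diagonal_mul_le {a b : ι → ℝ} (ha : 0 ≤ a) (hb : 0 ≤ b)
    (hab : Monovary a b) {P Q : Matrix ι ι ℝ} (hP : P ∈ orthogonalGroup ι ℝ)
    (hQ : Q ∈ orthogonalGroup ι ℝ) :
    |trace (diagonal a * P * diagonal b * Q)| ≤ a ⬝ᵥ b := by
  set T := (1 / 2 : ℝ) • (P ⊙ P) + (1 / 2 : ℝ) • (Q ⊙ Q)ᵀ
  have hT : T ∈ doublyStochastic ℝ ι :=
    convex_doublyStochastic (hadamard_self_mem_doublyStochastic hP)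
      (transpose_mem_doublyStochastic_iff.mpr (hadamard_self_mem_doublyStochastic hQ))
      (by norm_num) (by norm_num) (by norm_num)
  have am_gm (x y : ℝ) : |x * y| ≤ 1 / 2 * (x * x) + 1 / 2 * (y * y) :=
    abs_le.mpr ⟨by nlinarith [sq_nonneg (x + y)], by nlinarith [sq_nonneg (x - y)]⟩
  calc |trace (diagonal a * P * diagonal b * Q)|
      = |∑ i, ∑ j, a i * P i j * b j * Q j i| := by
        rw [trace_diagonal_mul_mul_diagonal_mul]
    _ ≤ ∑ i, ∑ j, |a i * P i j * b j * Q j i| :=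
        (Finset.abs_sum_le_sum_abs _ _).trans
          (Finset.sum_le_sum fun i _ => Finset.abs_sum_le_sum_abs _ _)
    _ ≤ ∑ i, ∑ j, a i * (T i j * b j) := by
        gcongr with i _ j _
        calc |a i * P i j * b j * Q j i| = a i * b j * |P i j * Q j i| := by
              rw [abs_mul, abs_mul, abs_mul, abs_mul, abs_of_nonneg (ha i), abs_of_nonneg (hb j)]
              ring
          _ ≤ a i * b j * T i j := by
              gcongr
              · exact mul_nonneg (ha i) (hb j)
              · simpa [T] using am_gm (P i j) (Q j i)
          _ = a i * (T i j * b j) := by ring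
    _ = a ⬝ᵥ T *ᵥ b := by simp only [dotProduct, mulVec, Finset.mul_sum]
    _ ≤ a ⬝ᵥ b := hab.dotProduct_mulVec_le_of_mem_doublyStochastic hT

end Matrix

/-- von Neumann trace inequality: `|Tr(AB)| ≤ ∑ i σ_i(A) σ_i(B)` where the singular values
of `A` and `B` are listed in decreasing order. -/
theorem von_neumann_trace_inequality {n : ℕ}
    (A B : Matrix (Fin n) (Fin n) ℝ)
    (UA VA UB VB : Matrix (Fin n) (Fin n) ℝ) (σA σB : Fin n → ℝ)
    (hA : IsSVD A UA σA VA) (hB : IsSVD B UB σB VB) :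
    |(A * B).trace| ≤ ∑ i, σA i * σB i := by
  obtain ⟨hUA, hVA, hσA, hσA0, rfl⟩ := hA
  obtain ⟨hUB, hVB, hσB, hσB0, rfl⟩ := hB
  have htrace : (UA * diagonal σA * VAᵀ * (UB * diagonal σB * VBᵀ)).trace
      = (diagonal σA * (VAᵀ * UB) * diagonal σB * (VBᵀ * UA)).trace := by
    simp only [Matrix.mul_assoc]
    rw [trace_mul_comm UA]
    simp only [Matrix.mul_assoc]
  rw [htrace]
  exact abs_trace_diagonal_mul_mul_diagonal_mul_le hσA0 hσB0 (hσA.monovary hσB)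
    (transpose_mul_mem_orthogonalGroup hVA hUB) (transpose_mul_mem_orthogonalGroup hVB hUA)
end

section
/- Let Θ be a threshold function, λ ≥ 0, and let P be a penalty satisfying condition (constrP) for Θ. Then for every t ∈ ℝ at which Θ(·;λ) is continuous, θ̂ = Θ(t;λ) is the unique global minimizer over θ ∈ ℝ of the function θ ↦ (t−θ)²/2 + P(θ;λ). -/
/-!
Write `G u = sup {s | Θ(s;λ) ≤ u}` and `a = Θ(t;λ)`. Condition (constrP) turns the objective into
`∫₀^{|θ|} G - tθ + q(θ)` up to a constant, and `q(a) = 0 ≤ q(θ)`. By oddness we may take `t ≥ 0`,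
so that `a ≥ 0` and replacing `θ` by `|θ|` can only decrease `-tθ`. For `θ ≥ 0` the increment
over `a` is `∫ₐ^θ (G u - t) du`, and continuity of `Θ(·;λ)` at `t` gives `G u > t` for `u > a`
and `G u < t` for `u < a`, so this increment is strictly positive.
-/

/-- A threshold function `Θ(t; λ)`, defined for all `t ∈ ℝ` and `λ ≥ 0`:
(1) odd in `t`; (2) nondecreasing in `t`; (3) tends to `∞` as `t → ∞`;
(4) `0 ≤ Θ(t;λ) ≤ t` for `t ≥ 0`. -/
def IsThresholdFunction (Θ : ℝ → ℝ → ℝ) : Prop :=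
  ∀ lam : ℝ, 0 ≤ lam →
    (∀ t : ℝ, Θ (-t) lam = -Θ t lam) ∧
    (Monotone fun t => Θ t lam) ∧
    Filter.Tendsto (fun t => Θ t lam) Filter.atTop Filter.atTop ∧
    (∀ t : ℝ, 0 ≤ t → 0 ≤ Θ t lam ∧ Θ t lam ≤ t)

open Filter Topology MeasureTheory

noncomputable def upperInverse (f : ℝ → ℝ) (u : ℝ) : ℝ := sSup {s | f s ≤ u}

section UpperInverse

variable {f : ℝ → ℝ}

lemma eq_neg_comp_neg_of_odd (hodd : ∀ s, f (-s) = -f s) : f = fun s => -f (-s) :=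
  funext fun s => by rw [hodd, neg_neg]

lemma tendsto_atBot_of_odd (hodd : ∀ s, f (-s) = -f s) (htop : Tendsto f atTop atTop) :
    Tendsto f atBot atBot := by
  rw [eq_neg_comp_neg_of_odd hodd]
  exact tendsto_neg_atTop_atBot.comp (htop.comp tendsto_neg_atBot_atTop)

lemma continuousAt_neg_of_odd (hodd : ∀ s, f (-s) = -f s) {t : ℝ} (hcont : ContinuousAt f t) :
    ContinuousAt f (-t) := by
  rw [eq_neg_comp_neg_of_odd hodd]
  exact (hcont.comp_of_eq continuous_neg.continuousAt (neg_neg t)).neg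

lemma bddAbove_setOf_le_of_tendsto_atTop (htop : Tendsto f atTop atTop) (u : ℝ) :
    BddAbove {s | f s ≤ u} := by
  obtain ⟨s₀, hs₀⟩ := eventually_atTop.mp (htop.eventually_gt_atTop u)
  exact ⟨s₀, fun s hs => not_lt.mp fun h => (hs₀ s h.le).not_ge hs⟩

lemma nonempty_setOf_le_of_tendsto_atBot (hbot : Tendsto f atBot atBot) (u : ℝ) :
    {s | f s ≤ u}.Nonempty :=
  (hbot.eventually_le_atBot u).exists

lemma upperInverse_mono (htop : Tendsto f atTop atTop) (hbot : Tendsto f atBot atBot) :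
    Monotone (upperInverse f) := fun _ v huv =>
  csSup_le_csSup (bddAbove_setOf_le_of_tendsto_atTop htop v)
    (nonempty_setOf_le_of_tendsto_atBot hbot _) fun _ hs => le_trans hs huv

lemma lt_upperInverse_of_continuousAt (htop : Tendsto f atTop atTop) {t u : ℝ}
    (hcont : ContinuousAt f t) (hlt : f t < u) : t < upperInverse f u := by
  obtain ⟨s, hts, hs⟩ := (hcont.eventually (gt_mem_nhds hlt)).exists_gt
  exact hts.trans_le (le_csSup (bddAbove_setOf_le_of_tendsto_atTop htop u) hs.le)

lemma upperInverse_lt_of_continuousAt (hf : Monotone f) (hbot : Tendsto f atBot atBot)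
    {t u : ℝ} (hcont : ContinuousAt f t) (hlt : u < f t) : upperInverse f u < t := by
  obtain ⟨s, hst, hs⟩ := (hcont.eventually (lt_mem_nhds hlt)).exists_lt
  refine lt_of_le_of_lt (csSup_le (nonempty_setOf_le_of_tendsto_atBot hbot u) fun x hx => ?_) hst
  exact not_lt.mp fun hsx => (hs.trans_le (hf hsx.le)).not_ge hx

theorem mul_sub_lt_integral_upperInverse (hf : Monotone f) (htop : Tendsto f atTop atTop)
    (hbot : Tendsto f atBot atBot) {t θ : ℝ} (hcont : ContinuousAt f t) (hθ : θ ≠ f t) :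
    t * (θ - f t) < ∫ u in f t..θ, upperInverse f u := by
  have hint : ∀ a b, IntervalIntegrable (fun u => upperInverse f u - t) volume a b :=
    fun _ _ => (upperInverse_mono htop hbot).intervalIntegrable.sub intervalIntegrable_const
  have hsplit : ∫ u in f t..θ, (upperInverse f u - t) =
      (∫ u in f t..θ, upperInverse f u) - t * (θ - f t) := by
    rw [intervalIntegral.integral_sub (upperInverse_mono htop hbot).intervalIntegrable
      intervalIntegrable_const, intervalIntegral.integral_const, smul_eq_mul, mul_comm]
  suffices 0 < ∫ u in f t..θ, (upperInverse f u - t) by linarith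
  rcases hθ.lt_or_gt with hlt | hgt
  · rw [intervalIntegral.integral_symm, ← intervalIntegral.integral_neg]
    refine intervalIntegral.intervalIntegral_pos_of_pos_on (hint _ _).neg (fun u hu => ?_) hlt
    linarith [upperInverse_lt_of_continuousAt hf hbot hcont hu.2]
  · refine intervalIntegral.intervalIntegral_pos_of_pos_on (hint _ _) (fun u hu => ?_) hgt
    linarith [lt_upperInverse_of_continuousAt htop hcont hu.1]

theorem integral_upperInverse_abs_sub_mul_lt (hf : Monotone f) (hodd : ∀ s, f (-s) = -f s)
    (htop : Tendsto f atTop atTop) {t θ : ℝ} (hcont : ContinuousAt f t) (hθ : θ ≠ f t) :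
    (∫ u in 0..|f t|, upperInverse f u) - t * f t < (∫ u in 0..|θ|, upperInverse f u) - t * θ := by
  wlog ht : 0 ≤ t generalizing t θ
  · have := this (continuousAt_neg_of_odd hodd hcont) (θ := -θ)
      (by rw [hodd, ne_eq, neg_inj]; exact hθ) (by linarith)
    simpa only [hodd, abs_neg, neg_mul_neg] using this
  have hbot := tendsto_atBot_of_odd hodd htop
  have hf0 : f 0 = 0 := by linarith [neg_zero (G := ℝ) ▸ hodd 0]
  have hft : 0 ≤ f t := hf0 ▸ hf ht
  have hG : ∀ a b, IntervalIntegrable (upperInverse f) volume a b :=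
    fun _ _ => (upperInverse_mono htop hbot).intervalIntegrable
  have hincr := intervalIntegral.integral_interval_sub_left (hG 0 |θ|) (hG 0 (f t))
  rw [abs_of_nonneg hft]
  rcases eq_or_ne |θ| (f t) with habs | habs
  · have hθneg : θ = -f t := ((abs_eq hft).mp habs).resolve_left hθ
    have hpos : 0 < f t := lt_of_le_of_ne hft fun h => hθ (by rw [hθneg, ← h, neg_zero])
    have htpos : 0 < t := lt_of_le_of_ne ht fun h => hpos.ne' (by rw [← h, hf0])
    rw [habs, hθneg]
    linarith [mul_pos htpos hpos]
  · have := mul_sub_lt_integral_upperInverse hf htop hbot hcont habs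
    linarith [mul_le_mul_of_nonneg_left (le_abs_self θ) ht]

end UpperInverse

/-- Let `Θ` be a threshold function, `λ ≥ 0`, and let `P` be a penalty satisfying condition
(constrP) for `Θ`, i.e. `P(θ) − P(0) = ∫₀^{|θ|} (sup{s : Θ(s;λ) ≤ u} − u) du + q(θ)`
with `q ≥ 0` and `q(Θ(t;λ)) = 0` for all `t`. Then for every `t` at which `Θ(·;λ)` is
continuous, `Θ(t;λ)` is the unique global minimizer of `θ ↦ (t−θ)²/2 + P(θ)`. -/
theorem scalar_thresholding_unique_minimizer
    (Θ : ℝ → ℝ → ℝ) (hΘ : IsThresholdFunction Θ) (lam : ℝ) (hlam : 0 ≤ lam)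
    (P q : ℝ → ℝ)
    (hq : ∀ θ : ℝ, 0 ≤ q θ) (hqΘ : ∀ t : ℝ, q (Θ t lam) = 0)
    (hP : ∀ θ : ℝ,
      P θ - P 0 = (∫ u in (0:ℝ)..|θ|, (sSup {s : ℝ | Θ s lam ≤ u} - u)) + q θ)
    (t : ℝ) (hcont : ContinuousAt (fun s => Θ s lam) t) :
    ∀ θ : ℝ, θ ≠ Θ t lam →
      (t - Θ t lam) ^ 2 / 2 + P (Θ t lam) < (t - θ) ^ 2 / 2 + P θ := by
  obtain ⟨hodd, hmono, htop, -⟩ := hΘ lam hlam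
  have hpen : ∀ θ,
      P θ = P 0 + (∫ u in 0..|θ|, upperInverse (fun s => Θ s lam) u) - θ ^ 2 / 2 + q θ := by
    intro θ
    have hG := (upperInverse_mono htop (tendsto_atBot_of_odd hodd htop)).intervalIntegrable
      (μ := volume) (a := 0) (b := |θ|)
    have hPθ : P θ - P 0 = (∫ u in 0..|θ|, (upperInverse (fun s => Θ s lam) u - u)) + q θ := hP θ
    rw [intervalIntegral.integral_sub hG (continuous_id'.intervalIntegrable _ _),
      integral_id] at hPθ
    linarith [sq_abs θ]
  intro θ hθ
  have key := integral_upperInverse_abs_sub_mul_lt hmono hodd htop hcont hθ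
  rw [hpen θ, hpen (Θ t lam), hqΘ]
  linarith [hq θ]
end

section
/- For any Y, B ∈ ℝ^{n×m} with singular values d_{0,1} ≥ d_{0,2} ≥ … and d_1 ≥ d_2 ≥ …, respectively, one has ‖Y − B‖_F² ≥ Σ_i (d_{0,i} − d_i)². -/
open Matrix

/-- Squared Frobenius norm of a real matrix. -/
def frobSq {n m : ℕ} (A : Matrix (Fin n) (Fin m) ℝ) : ℝ := ∑ i, ∑ j, A i j ^ 2

/-!
Expanding the square, `‖Y - B‖_F² = ∑ d₀ᵢ² + ∑ dᵢ² - 2 tr (Yᵀ B)`, so the claim is von Neumann's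
trace inequality `tr (Yᵀ B) ≤ ∑ d₀ᵢ dᵢ`. With `P = U_Yᵀ U_B` and `Q = V_Yᵀ V_B` one has
`tr (Yᵀ B) = ∑ᵢⱼ d₀ᵢ dⱼ Pᵢⱼ Qᵢⱼ`; by AM-GM `Pᵢⱼ Qᵢⱼ ≤ (Pᵢⱼ² + Qᵢⱼ²) / 2`, and by Bessel's inequality
the latter matrix is doubly substochastic. For nonnegative decreasing `a`, `b` and a doubly
substochastic `S`, Abel summation in `a` reduces `aᵀ S b ≤ aᵀ b` to its prefix-sum versions, and
these hold because weights in `[0, 1]` of total mass at most `p + 1` capture at most the `p + 1`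
largest entries of `b`.
-/

open Finset

theorem dotProduct_nonneg_of_antitone_of_sum_Iic_nonneg {k : ℕ} {a z : Fin k → ℝ}
    (ha : Antitone a) (ha0 : ∀ i, 0 ≤ a i) (hz : ∀ p, 0 ≤ ∑ i ∈ Iic p, z i) :
    0 ≤ a ⬝ᵥ z := by
  induction k with
  | zero => simp
  | succ k ih =>
    have hsplit : a ⬝ᵥ z =
        (fun i : Fin k ↦ a i.castSucc - a (Fin.last k)) ⬝ᵥ (fun i ↦ z i.castSucc)
          + a (Fin.last k) * ∑ i ∈ Iic (Fin.last k), z i := by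
      rw [← Fin.top_eq_last, Iic_top]
      simp only [dotProduct, Fin.sum_univ_castSucc, sub_mul, sum_sub_distrib, mul_add, mul_sum,
        Fin.top_eq_last]
      ring
    rw [hsplit]
    refine add_nonneg (ih ?_ ?_ ?_) (mul_nonneg (ha0 _) (hz _))
    · exact fun i j hij ↦ sub_le_sub_right (ha (Fin.castSucc_le_castSucc_iff.2 hij)) _
    · exact fun i ↦ sub_nonneg.2 (ha (Fin.castSucc_lt_last i).le)
    · exact fun p ↦ Fin.sum_Iic_castSucc z p ▸ hz p.castSucc

theorem sum_mul_le_sum_Iic_of_antitone {ι : Type*} [Fintype ι] [LinearOrder ι]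
    [LocallyFiniteOrderBot ι] {b c : ι → ℝ} (hb : Antitone b) {p : ι} (hbp : 0 ≤ b p)
    (hc0 : ∀ j, 0 ≤ c j) (hc1 : ∀ j, c j ≤ 1) (hc : ∑ j, c j ≤ #(Iic p)) :
    ∑ j, c j * b j ≤ ∑ j ∈ Iic p, b j := by
  -- compare every term with the threshold value `b p`
  have termwise : ∀ j, c j * b j - (if j ∈ Iic p then b j else 0)
      ≤ b p * (c j - if j ∈ Iic p then 1 else 0) := by
    intro j
    by_cases hj : j ≤ p
    · simp only [mem_Iic, hj, if_true]
      nlinarith [hb hj, hc1 j]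
    · simp only [mem_Iic, hj, if_false]
      nlinarith [hb (not_le.1 hj).le, hc0 j]
  have hsum := sum_le_sum fun j (_ : j ∈ univ) ↦ termwise j
  simp only [sum_sub_distrib, ← mul_sum, sum_ite_mem, univ_inter, sum_const, nsmul_one] at hsum
  linarith [mul_nonpos_of_nonneg_of_nonpos hbp (sub_nonpos.2 hc)]

theorem dotProduct_mulVec_le_of_substochastic {k : ℕ} {a b : Fin k → ℝ}
    (ha : Antitone a) (ha0 : ∀ i, 0 ≤ a i) (hb : Antitone b) (hb0 : ∀ i, 0 ≤ b i)
    {S : Matrix (Fin k) (Fin k) ℝ} (hS : ∀ i j, 0 ≤ S i j)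
    (hrow : ∀ i, ∑ j, S i j ≤ 1) (hcol : ∀ j, ∑ i, S i j ≤ 1) :
    a ⬝ᵥ (S *ᵥ b) ≤ a ⬝ᵥ b := by
  suffices 0 ≤ a ⬝ᵥ (b - S *ᵥ b) by rwa [dotProduct_sub, sub_nonneg] at this
  refine dotProduct_nonneg_of_antitone_of_sum_Iic_nonneg ha ha0 fun p ↦ ?_
  have hmass : ∑ i ∈ Iic p, (S *ᵥ b) i = ∑ j, (∑ i ∈ Iic p, S i j) * b j := by
    simp only [mulVec, dotProduct, sum_mul]
    exact sum_comm
  simp only [Pi.sub_apply, sum_sub_distrib, sub_nonneg, hmass]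
  refine sum_mul_le_sum_Iic_of_antitone hb (hb0 p) (fun j ↦ sum_nonneg fun i _ ↦ hS i j)
    (fun j ↦ (sum_le_sum_of_subset_of_nonneg (subset_univ _) fun i _ _ ↦ hS i j).trans (hcol j))
    ?_
  calc ∑ j, ∑ i ∈ Iic p, S i j = ∑ i ∈ Iic p, ∑ j, S i j := sum_comm
    _ ≤ ∑ i ∈ Iic p, 1 := sum_le_sum fun i _ ↦ hrow i
    _ = #(Iic p) := by simp

theorem sum_sq_transpose_mul_apply_le {m k l : Type*} [Fintype m] [Fintype l] [DecidableEq l]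
    {U : Matrix m k ℝ} {W : Matrix m l ℝ} (hW : Wᵀ * W = 1) (i : k) :
    ∑ j, (Uᵀ * W) i j ^ 2 ≤ (Uᵀ * U) i i := by
  -- `R` is the residual of projecting the columns of `U` onto the column span of `W`
  set R := U - W * (Uᵀ * W)ᵀ
  have hWW : ∀ X : Matrix l k ℝ, Wᵀ * (W * X) = X := fun X ↦ by
    rw [← Matrix.mul_assoc, hW, Matrix.one_mul]
  have hgram : Rᵀ * R = Uᵀ * U - (Uᵀ * W) * (Uᵀ * W)ᵀ := by
    simp only [R, transpose_sub, transpose_mul, transpose_transpose, Matrix.sub_mul,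
      Matrix.mul_sub, Matrix.mul_assoc, hWW]
    abel
  have hnonneg : 0 ≤ (Rᵀ * R) i i := sum_nonneg fun _ _ ↦ mul_self_nonneg _
  rw [hgram, Matrix.sub_apply, sub_nonneg] at hnonneg
  simpa only [mul_apply, transpose_apply, sq] using hnonneg

theorem sum_sq_transpose_mul_apply_le_one {m k l : Type*} [Fintype m] [Fintype l]
    [DecidableEq k] [DecidableEq l] {U : Matrix m k ℝ} {W : Matrix m l ℝ} (hU : Uᵀ * U = 1)
    (hW : Wᵀ * W = 1) (i : k) :
    ∑ j, (Uᵀ * W) i j ^ 2 ≤ 1 := by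
  simpa [hU] using sum_sq_transpose_mul_apply_le (U := U) hW i

theorem trace_transpose_mul_svd {m n k l : Type*} [Fintype m] [Fintype n] [Fintype k]
    [Fintype l] [DecidableEq k] [DecidableEq l]
    (U₁ : Matrix m k ℝ) (σ₁ : k → ℝ) (V₁ : Matrix n k ℝ)
    (U₂ : Matrix m l ℝ) (σ₂ : l → ℝ) (V₂ : Matrix n l ℝ) :
    trace ((U₁ * diagonal σ₁ * V₁ᵀ)ᵀ * (U₂ * diagonal σ₂ * V₂ᵀ)) =
      σ₁ ⬝ᵥ (((U₁ᵀ * U₂) ⊙ (V₁ᵀ * V₂)) *ᵥ σ₂) := by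
  have hcyc : trace ((U₁ * diagonal σ₁ * V₁ᵀ)ᵀ * (U₂ * diagonal σ₂ * V₂ᵀ)) =
      trace (diagonal σ₁ * (U₁ᵀ * U₂ * diagonal σ₂ * (V₁ᵀ * V₂)ᵀ)) := by
    simp only [transpose_mul, transpose_transpose, diagonal_transpose, Matrix.mul_assoc]
    rw [trace_mul_comm, Matrix.mul_assoc]
    simp only [Matrix.mul_assoc]
  rw [hcyc]
  simp only [trace, Matrix.diag, diagonal_mul, dotProduct, mulVec, hadamard_apply, mul_sum]
  refine sum_congr rfl fun i _ ↦ ?_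
  rw [mul_apply, mul_sum]
  refine sum_congr rfl fun j _ ↦ ?_
  rw [mul_diagonal, transpose_apply]
  ring

theorem trace_transpose_sub_mul_sub {m n : Type*} [Fintype m] [Fintype n]
    (Y B : Matrix m n ℝ) :
    trace ((Y - B)ᵀ * (Y - B)) = trace (Yᵀ * Y) + trace (Bᵀ * B) - 2 * trace (Yᵀ * B) := by
  have hcross : trace (Bᵀ * Y) = trace (Yᵀ * B) := by
    rw [← trace_transpose, transpose_mul, transpose_transpose]
  simp only [transpose_sub, Matrix.sub_mul, Matrix.mul_sub, trace_sub, hcross]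
  ring

namespace IsSVD

variable {n m k : ℕ}

theorem trace_transpose_mul_self {B : Matrix (Fin n) (Fin m) ℝ} {U : Matrix (Fin n) (Fin k) ℝ}
    {σ : Fin k → ℝ} {V : Matrix (Fin m) (Fin k) ℝ} (h : IsSVD B U σ V) :
    trace (Bᵀ * B) = σ ⬝ᵥ σ := by
  obtain ⟨hU, hV, -, -, rfl⟩ := h
  rw [trace_transpose_mul_svd, hU, hV, one_hadamard, diag_one, Pi.one_def, diagonal_one,
    one_mulVec]

theorem trace_transpose_mul_le {Y B : Matrix (Fin n) (Fin m) ℝ}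
    {U₁ U₂ : Matrix (Fin n) (Fin k) ℝ} {σ₁ σ₂ : Fin k → ℝ} {V₁ V₂ : Matrix (Fin m) (Fin k) ℝ}
    (hY : IsSVD Y U₁ σ₁ V₁) (hB : IsSVD B U₂ σ₂ V₂) :
    trace (Yᵀ * B) ≤ σ₁ ⬝ᵥ σ₂ := by
  obtain ⟨hU₁, hV₁, hσ₁, hσ₁0, rfl⟩ := hY
  obtain ⟨hU₂, hV₂, hσ₂, hσ₂0, rfl⟩ := hB
  rw [trace_transpose_mul_svd]
  set P := U₁ᵀ * U₂
  set Q := V₁ᵀ * V₂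
  set S : Matrix (Fin k) (Fin k) ℝ := of fun i j ↦ (P i j ^ 2 + Q i j ^ 2) / 2
  have hPQ : ∀ i j, (P ⊙ Q) i j ≤ S i j := fun i j ↦ by
    simp only [hadamard_apply, S, of_apply]
    nlinarith [sq_nonneg (P i j - Q i j)]
  have hrow : ∀ i, ∑ j, S i j ≤ 1 := fun i ↦ by
    simp only [S, of_apply, ← sum_div, sum_add_distrib]
    linarith [sum_sq_transpose_mul_apply_le_one hU₁ hU₂ i,
      sum_sq_transpose_mul_apply_le_one hV₁ hV₂ i]
  have hcol : ∀ j, ∑ i, S i j ≤ 1 := fun j ↦ by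
    have hP : ∀ i, P i j = (U₂ᵀ * U₁) j i := fun i ↦ by
      rw [← transpose_apply (U₂ᵀ * U₁), transpose_mul, transpose_transpose]
    have hQ : ∀ i, Q i j = (V₂ᵀ * V₁) j i := fun i ↦ by
      rw [← transpose_apply (V₂ᵀ * V₁), transpose_mul, transpose_transpose]
    simp only [S, of_apply, hP, hQ, ← sum_div, sum_add_distrib]
    linarith [sum_sq_transpose_mul_apply_le_one hU₂ hU₁ j,
      sum_sq_transpose_mul_apply_le_one hV₂ hV₁ j]
  calc σ₁ ⬝ᵥ ((P ⊙ Q) *ᵥ σ₂) ≤ σ₁ ⬝ᵥ (S *ᵥ σ₂) :=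
        dotProduct_le_dotProduct_of_nonneg_left
          (fun i ↦ dotProduct_le_dotProduct_of_nonneg_right (hPQ i) hσ₂0) hσ₁0
    _ ≤ σ₁ ⬝ᵥ σ₂ := dotProduct_mulVec_le_of_substochastic hσ₁ hσ₁0 hσ₂ hσ₂0
        (fun i j ↦ by simp only [S, of_apply]; positivity) hrow hcol

end IsSVD

theorem frobSq_eq_trace {n m : ℕ} (A : Matrix (Fin n) (Fin m) ℝ) :
    frobSq A = trace (Aᵀ * A) := by
  simp only [frobSq, trace, mul_apply, Matrix.diag, transpose_apply, sq]
  exact sum_comm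

/-- For any `Y, B ∈ ℝ^{n×m}` with singular values `d₀` and `d` (in decreasing order),
`‖Y − B‖_F² ≥ ∑_i (d₀_i − d_i)²`. -/
theorem frobenius_ge_singular_value_diff {n m : ℕ}
    (Y B : Matrix (Fin n) (Fin m) ℝ)
    (UY : Matrix (Fin n) (Fin (min n m)) ℝ) (d0 : Fin (min n m) → ℝ)
    (VY : Matrix (Fin m) (Fin (min n m)) ℝ)
    (UB : Matrix (Fin n) (Fin (min n m)) ℝ) (d : Fin (min n m) → ℝ)
    (VB : Matrix (Fin m) (Fin (min n m)) ℝ)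
    (hY : IsSVD Y UY d0 VY) (hB : IsSVD B UB d VB) :
    frobSq (Y - B) ≥ ∑ i, (d0 i - d i) ^ 2 := by
  calc ∑ i, (d0 i - d i) ^ 2 = d0 ⬝ᵥ d0 + d ⬝ᵥ d - 2 * (d0 ⬝ᵥ d) := by
        simp only [dotProduct, mul_sum, ← sum_add_distrib, ← sum_sub_distrib]
        exact sum_congr rfl fun i _ ↦ by ring
    _ ≤ trace (Yᵀ * Y) + trace (Bᵀ * B) - 2 * trace (Yᵀ * B) := by
        rw [hY.trace_transpose_mul_self, hB.trace_transpose_mul_self]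
        linarith [hY.trace_transpose_mul_le hB]
    _ = frobSq (Y - B) := by rw [frobSq_eq_trace, trace_transpose_sub_mul_sub]
end

section
/- (Singular-value soft-thresholding solves nuclear norm penalization) Let Y ∈ ℝ^{n×m} with singular value decomposition Y = U diag(σ_i(Y)) Vᵀ and let λ ≥ 0. Then B̂ = U diag(max(σ_i(Y) − λ, 0)) Vᵀ is the unique global minimizer over B ∈ ℝ^{n×m} of ‖Y−B‖_F²/2 + λ Σ_i σ_i(B), where Σ_i σ_i(B) is the nuclear norm of B. -/
open Matrix

namespace SoftThresh

variable {n m k : ℕ}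

/-- Frobenius inner product. -/
def ip (A B : Matrix (Fin n) (Fin m) ℝ) : ℝ := ∑ i, ∑ j, A i j * B i j

lemma ip_eq_trace (A B : Matrix (Fin n) (Fin m) ℝ) : ip A B = trace (Aᵀ * B) := by
  simp only [ip, trace, diag, Matrix.mul_apply, transpose_apply]
  rw [Finset.sum_comm]

lemma frobSq_nonneg (A : Matrix (Fin n) (Fin m) ℝ) : 0 ≤ frobSq A :=
  Finset.sum_nonneg fun i _ => Finset.sum_nonneg fun j _ => sq_nonneg _

lemma frobSq_pos {A : Matrix (Fin n) (Fin m) ℝ} (h : A ≠ 0) : 0 < frobSq A := by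
  rcases (frobSq_nonneg A).lt_or_eq with h' | h'
  · exact h'
  · exfalso; apply h; ext i j
    have h0 : ∑ i, ∑ j, A i j ^ 2 = 0 := h'.symm
    have h1 := (Finset.sum_eq_zero_iff_of_nonneg
      (fun i _ => Finset.sum_nonneg fun j _ => sq_nonneg (A i j))).mp h0 i (Finset.mem_univ i)
    have h2 := (Finset.sum_eq_zero_iff_of_nonneg
      (fun j _ => sq_nonneg (A i j))).mp h1 j (Finset.mem_univ j)
    simpa using sq_eq_zero_iff.mp h2

lemma frobSq_add (X Z : Matrix (Fin n) (Fin m) ℝ) :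
    frobSq (X + Z) = frobSq X + 2 * ip X Z + frobSq Z := by
  have h : ∀ i j, (X + Z) i j ^ 2 = X i j ^ 2 + 2 * (X i j * Z i j) + Z i j ^ 2 := by
    intro i j; simp only [Matrix.add_apply]; ring
  simp only [frobSq, ip, h, Finset.sum_add_distrib, Finset.mul_sum]

lemma ip_sub (X A B : Matrix (Fin n) (Fin m) ℝ) : ip X (A - B) = ip X A - ip X B := by
  simp [ip, Matrix.sub_apply, mul_sub, Finset.sum_sub_distrib]

lemma trace_dmdn (c d : Fin k → ℝ) (M N : Matrix (Fin k) (Fin k) ℝ) :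
    trace (diagonal c * M * diagonal d * Nᵀ) = ∑ i, ∑ j, c i * d j * M i j * N i j := by
  have h : ∀ x j, (diagonal c * M * diagonal d) x j = c x * M x j * d j := by
    intro x j; rw [Matrix.mul_diagonal, Matrix.diagonal_mul]
  simp only [trace, diag, Matrix.mul_apply, h, transpose_apply]
  refine Finset.sum_congr rfl fun i _ => Finset.sum_congr rfl fun j _ => by ring

lemma ip_factored (U UB : Matrix (Fin n) (Fin k) ℝ) (V VB : Matrix (Fin m) (Fin k) ℝ)
    (c d : Fin k → ℝ) :
    ip (U * diagonal c * Vᵀ) (UB * diagonal d * VBᵀ)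
      = ∑ i, ∑ j, c i * d j * ((Uᵀ * UB) i j) * ((Vᵀ * VB) i j) := by
  have step1 : (U * diagonal c * Vᵀ)ᵀ * (UB * diagonal d * VBᵀ)
      = V * (diagonal c * Uᵀ * UB * diagonal d * VBᵀ) := by
    rw [transpose_mul, transpose_mul, transpose_transpose, diagonal_transpose]
    simp [Matrix.mul_assoc]
  rw [ip_eq_trace, step1, trace_mul_comm]
  have step2 : diagonal c * Uᵀ * UB * diagonal d * VBᵀ * V
      = diagonal c * (Uᵀ * UB) * diagonal d * (Vᵀ * VB)ᵀ := by
    rw [transpose_mul, transpose_transpose]; simp [Matrix.mul_assoc]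
  rw [step2, trace_dmdn]

/-- Columns of `Uᵀ * W` have squared norm at most 1 when `U, W` have orthonormal columns. -/
lemma col_sq_le {U W : Matrix (Fin n) (Fin k) ℝ} (hU : Uᵀ * U = 1) (hW : Wᵀ * W = 1)
    (l : Fin k) : ∑ j, ((Uᵀ * W) j l) ^ 2 ≤ 1 := by
  set M := Uᵀ * W with hM
  set E := W - U * M with hE
  have key : Eᵀ * E = 1 - Mᵀ * M := by
    have h1 : Uᵀ * (U * M) = M := by rw [← Matrix.mul_assoc, hU, Matrix.one_mul]
    have h2 : Wᵀ * U = Mᵀ := by rw [hM, transpose_mul, transpose_transpose]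
    calc Eᵀ * E = (Wᵀ - Mᵀ * Uᵀ) * (W - U * M) := by
          rw [hE, transpose_sub, transpose_mul]
      _ = Wᵀ * W - (Wᵀ * U) * M - Mᵀ * (Uᵀ * W) + Mᵀ * (Uᵀ * (U * M)) := by
          rw [Matrix.sub_mul, Matrix.mul_sub, Matrix.mul_sub]
          rw [Matrix.mul_assoc Mᵀ Uᵀ W, Matrix.mul_assoc Mᵀ Uᵀ (U*M),
              Matrix.mul_assoc Wᵀ U M]
          abel
      _ = 1 - Mᵀ * M := by rw [hW, h1, h2, ← hM]; abel
  have hMl : (Mᵀ * M) l l = ∑ j, (M j l) ^ 2 := by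
    simp [Matrix.mul_apply, sq]
  have hEl : 0 ≤ (Eᵀ * E) l l := by
    have : (Eᵀ * E) l l = ∑ j, (E j l) ^ 2 := by simp [Matrix.mul_apply, sq]
    rw [this]; exact Finset.sum_nonneg fun j _ => sq_nonneg _
  have hkey := congrArg (fun A => A l l) key
  simp only [Matrix.sub_apply, Matrix.one_apply_eq] at hkey
  rw [hkey, hMl] at hEl
  linarith

end SoftThresh

open SoftThresh in
/-- Singular-value soft-thresholding solves nuclear norm penalization:
`B̂ = U diag(max(σ_i(Y)−λ, 0)) Vᵀ` is the unique global minimizer of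
`‖Y−B‖_F²/2 + λ ∑_i σ_i(B)`, where `∑_i σ_i(B)` is the nuclear norm of `B`
(stated via an arbitrary SVD of the competitor `B`). -/
theorem soft_thresholding_nuclear_norm {n m : ℕ}
    (lam : ℝ) (hlam : 0 ≤ lam)
    (Y : Matrix (Fin n) (Fin m) ℝ)
    (U : Matrix (Fin n) (Fin (min n m)) ℝ) (σ : Fin (min n m) → ℝ)
    (V : Matrix (Fin m) (Fin (min n m)) ℝ)
    (hY : IsSVD Y U σ V) :
    ∀ (B : Matrix (Fin n) (Fin m) ℝ)
      (UB : Matrix (Fin n) (Fin (min n m)) ℝ) (σB : Fin (min n m) → ℝ)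
      (VB : Matrix (Fin m) (Fin (min n m)) ℝ), IsSVD B UB σB VB →
      B ≠ U * diagonal (fun i => max (σ i - lam) 0) * Vᵀ →
      frobSq (Y - U * diagonal (fun i => max (σ i - lam) 0) * Vᵀ) / 2
          + lam * ∑ i, max (σ i - lam) 0
        < frobSq (Y - B) / 2 + lam * ∑ i, σB i := by
  obtain ⟨hUU, hVV, -, hσnn, hYdef⟩ := hY
  intro B UB σB VB hB hne
  obtain ⟨hUB, hVB, -, hσBnn, hBdef⟩ := hB
  set s : Fin (min n m) → ℝ := fun i => max (σ i - lam) 0 with hs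
  set Bh : Matrix (Fin n) (Fin m) ℝ := U * diagonal s * Vᵀ with hBh
  set c : Fin (min n m) → ℝ := fun i => σ i - s i with hc
  have hcnn : ∀ i, 0 ≤ c i := by
    intro i
    have h1 : σ i - lam ≤ σ i := by linarith
    have h2 : max (σ i - lam) 0 ≤ σ i := max_le h1 (hσnn i)
    simp only [hc, hs]
    linarith
  have hcle : ∀ i, c i ≤ lam := by
    intro i
    have := le_max_left (σ i - lam) 0
    simp only [hc, hs]
    linarith
  have hcs : ∀ i, c i * s i = lam * s i := by
    intro i
    rcases le_total (σ i - lam) 0 with h | h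
    · have h0 : s i = 0 := max_eq_right h
      rw [h0, mul_zero, mul_zero]
    · have h0 : s i = σ i - lam := max_eq_left h
      have h1 : c i = lam := by simp only [hc, h0]; ring
      rw [h1]
  have hG : Y - Bh = U * diagonal c * Vᵀ := by
    rw [hYdef, hBh, ← Matrix.sub_mul, ← Matrix.mul_sub, ← diagonal_sub]
  have hipBh : ip (Y - Bh) Bh = lam * ∑ i, s i := by
    rw [hG, hBh, ip_factored, hUU, hVV]
    rw [Finset.mul_sum]
    rw [show ∑ i, lam * s i = ∑ i, c i * s i from
      Finset.sum_congr rfl fun i _ => (hcs i).symm]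
    refine Finset.sum_congr rfl fun i _ => ?_
    rw [Finset.sum_eq_single i]
    · simp [Matrix.one_apply_eq]
    · intro j _ hj
      simp [Matrix.one_apply_ne (Ne.symm hj)]
    · intro h; exact absurd (Finset.mem_univ i) h
  have hipB : ip (Y - Bh) B ≤ lam * ∑ i, σB i := by
    rw [hG, hBdef, ip_factored]
    set M := Uᵀ * UB with hM
    set N := Vᵀ * VB with hN
    have hrow : ∀ j, ∑ i, c i * σB j * M i j * N i j ≤ lam * σB j := by
      intro j
      have hcol1 : ∑ i, (M i j) ^ 2 ≤ 1 := col_sq_le hUU hUB j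
      have hcol2 : ∑ i, (N i j) ^ 2 ≤ 1 := col_sq_le hVV hVB j
      have cs : (∑ i, |M i j| * |N i j|) ^ 2 ≤ (∑ i, (M i j) ^ 2) * (∑ i, (N i j) ^ 2) := by
        have := Finset.sum_mul_sq_le_sq_mul_sq Finset.univ (fun i => |M i j|) (fun i => |N i j|)
        simpa [sq_abs] using this
      have habs0 : 0 ≤ ∑ i, |M i j| * |N i j| :=
        Finset.sum_nonneg fun i _ => mul_nonneg (abs_nonneg _) (abs_nonneg _)
      have hA0 : 0 ≤ ∑ i, (M i j) ^ 2 := Finset.sum_nonneg fun i _ => sq_nonneg _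
      have hB0 : 0 ≤ ∑ i, (N i j) ^ 2 := Finset.sum_nonneg fun i _ => sq_nonneg _
      have habs : ∑ i, |M i j| * |N i j| ≤ 1 := by nlinarith
      calc ∑ i, c i * σB j * M i j * N i j
          = σB j * ∑ i, c i * (M i j * N i j) := by
            rw [Finset.mul_sum]
            exact Finset.sum_congr rfl fun i _ => by ring
        _ ≤ σB j * ∑ i, lam * (|M i j| * |N i j|) := by
            refine mul_le_mul_of_nonneg_left (Finset.sum_le_sum fun i _ => ?_) (hσBnn j)
            calc c i * (M i j * N i j)
                ≤ c i * |M i j * N i j| :=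
                  mul_le_mul_of_nonneg_left (le_abs_self _) (hcnn i)
              _ ≤ lam * |M i j * N i j| :=
                  mul_le_mul_of_nonneg_right (hcle i) (abs_nonneg _)
              _ = lam * (|M i j| * |N i j|) := by rw [abs_mul]
        _ = σB j * (lam * ∑ i, |M i j| * |N i j|) := by
            conv_rhs => rw [Finset.mul_sum]
        _ ≤ σB j * (lam * 1) :=
            mul_le_mul_of_nonneg_left (mul_le_mul_of_nonneg_left habs hlam) (hσBnn j)
        _ = lam * σB j := by ring
    calc ∑ i, ∑ j, c i * σB j * M i j * N i j
        = ∑ j, ∑ i, c i * σB j * M i j * N i j := Finset.sum_comm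
      _ ≤ ∑ j, lam * σB j := Finset.sum_le_sum fun j _ => hrow j
      _ = lam * ∑ j, σB j := (Finset.mul_sum _ _ _).symm
  have hexp : frobSq (Y - B)
      = frobSq (Y - Bh) + 2 * (ip (Y - Bh) Bh - ip (Y - Bh) B) + frobSq (Bh - B) := by
    have h0 : Y - B = (Y - Bh) + (Bh - B) := (sub_add_sub_cancel _ _ _).symm
    rw [h0, frobSq_add, ip_sub]
  have hpos : 0 < frobSq (Bh - B) := frobSq_pos (sub_ne_zero_of_ne (Ne.symm hne))
  linarith
end

section
/- (Berhu penalty from the fused soft-ridge threshold) Let λ > 0 and M > 0, and define the thresholding rule Θ_B(t;λ,M) = 0 if |t| ≤ λ, Θ_B(t;λ,M) = t − λ·sgn(t) if λ < |t| < λ+M, and Θ_B(t;λ,M) = t/(1+λ/M) if |t| ≥ λ+M. Then for every θ ∈ ℝ, ∫₀^{|θ|} (sup{s : Θ_B(s;λ,M) ≤ u} − u) du equals λ|θ| if |θ| ≤ M, and equals λ(θ² + M²)/(2M) if |θ| > M. -/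
/-!
On `[0, ∞)` the rule `Θ_B` is the soft threshold `s - λ` capped by the ridge shrinkage
`s / (1 + λ / M)`, and it is odd. Hence for `u ≥ 0` the sublevel set `{s | Θ_B s ≤ u}` is the
half-line `Iic (max (u + λ) (u (1 + λ / M)))`, so the integrand is `λ · max 1 (u / M)`: constant
up to `M`, linear after, which integrates to the Berhu penalty.
-/

/-- The fused soft-ridge (Berhu-generating) thresholding rule `Θ_B(t;λ,M)`. -/
noncomputable def thetaB (lam M t : ℝ) : ℝ :=
  if |t| ≤ lam then 0
  else if |t| < lam + M then t - lam * Real.sign t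
  else t / (1 + lam / M)

open intervalIntegral

section thetaB

variable {lam M : ℝ}

theorem thetaB_neg (t : ℝ) : thetaB lam M (-t) = -thetaB lam M t := by
  unfold thetaB
  simp only [abs_neg, Real.sign_neg]
  split_ifs <;> ring

theorem thetaB_of_nonneg (hlam : 0 ≤ lam) (hM : 0 < M) {s : ℝ} (hs : 0 ≤ s) :
    thetaB lam M s = max 0 (min (s - lam) (s / (1 + lam / M))) := by
  have hgap : s / (1 + lam / M) - (s - lam) = lam * (lam + M - s) / (M + lam) := by
    field_simp
    ring
  have hpos : 0 < M + lam := by linarith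
  unfold thetaB
  rw [abs_of_nonneg hs]
  split_ifs with h₁ h₂
  · exact (max_eq_left (min_le_of_left_le (by linarith))).symm
  · have : 0 ≤ lam * (lam + M - s) / (M + lam) := by
      apply div_nonneg (mul_nonneg hlam (by linarith)) hpos.le
    rw [Real.sign_of_pos (by linarith), min_eq_left (by linarith), max_eq_right (by linarith)]
    ring
  · have : lam * (lam + M - s) / (M + lam) ≤ 0 :=
      div_nonpos_of_nonpos_of_nonneg (mul_nonpos_of_nonneg_of_nonpos hlam (by linarith)) hpos.le
    rw [min_eq_right (by linarith), max_eq_right (by positivity)]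

theorem thetaB_nonpos (hlam : 0 ≤ lam) (hM : 0 < M) {s : ℝ} (hs : s ≤ 0) :
    thetaB lam M s ≤ 0 := by
  rw [← neg_neg s, thetaB_neg, thetaB_of_nonneg hlam hM (neg_nonneg.2 hs), neg_nonpos]
  exact le_max_left _ _

theorem thetaB_le_iff (hlam : 0 ≤ lam) (hM : 0 < M) {u s : ℝ} (hu : 0 ≤ u) :
    thetaB lam M s ≤ u ↔ s ≤ max (u + lam) (u * (1 + lam / M)) := by
  rcases le_total s 0 with hs | hs
  · exact iff_of_true ((thetaB_nonpos hlam hM hs).trans hu)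
      (hs.trans (le_max_of_le_left (by linarith)))
  · have hc : 0 < 1 + lam / M := by positivity
    rw [thetaB_of_nonneg hlam hM hs, max_le_iff, min_le_iff, sub_le_iff_le_add, div_le_iff₀ hc,
      le_max_iff]
    exact and_iff_right hu

theorem sSup_thetaB_le (hlam : 0 ≤ lam) (hM : 0 < M) {u : ℝ} (hu : 0 ≤ u) :
    sSup {s | thetaB lam M s ≤ u} = max (u + lam) (u * (1 + lam / M)) := by
  simp_rw [thetaB_le_iff hlam hM hu]
  exact csSup_Iic

theorem sSup_thetaB_le_sub (hlam : 0 ≤ lam) (hM : 0 < M) {u : ℝ} (hu : 0 ≤ u) :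
    sSup {s | thetaB lam M s ≤ u} - u = lam * max 1 (u / M) := by
  rw [sSup_thetaB_le hlam hM hu, ← max_sub_sub_right, mul_max_of_nonneg _ _ hlam]
  congr 1 <;> ring

end thetaB

theorem integral_max_one_div {M a : ℝ} (hM : 0 < M) (ha : 0 ≤ a) :
    ∫ u in (0:ℝ)..a, max 1 (u / M) = if a ≤ M then a else (a ^ 2 + M ^ 2) / (2 * M) := by
  have hint : ∀ b c : ℝ, IntervalIntegrable (fun u => max 1 (u / M)) MeasureTheory.volume b c :=
    fun b c => (by fun_prop : Continuous fun u : ℝ => max 1 (u / M)).intervalIntegrable b c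
  have integral_of_le : ∀ b, 0 ≤ b → b ≤ M → ∫ u in (0:ℝ)..b, max 1 (u / M) = b := by
    intro b hb hbM
    rw [integral_congr (g := fun _ => 1), integral_const, smul_eq_mul, mul_one, sub_zero]
    intro u hu
    rw [Set.uIcc_of_le hb] at hu
    exact max_eq_left ((div_le_one hM).2 (hu.2.trans hbM))
  split_ifs with haM
  · exact integral_of_le a ha haM
  · replace haM := (not_le.1 haM).le
    rw [← integral_add_adjacent_intervals (hint 0 M) (hint M a), integral_of_le M hM.le le_rfl,
      integral_congr (g := fun u => u / M), integral_div, integral_id]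
    · field_simp
      ring
    intro u hu
    rw [Set.uIcc_of_le haM] at hu
    exact max_eq_right ((one_le_div hM).2 hu.1)

/-- The penalty constructed from `Θ_B` via `P(θ;λ) = ∫₀^{|θ|} (sup{s : Θ(s;λ) ≤ u} − u) du`
is the Berhu penalty: `λ|θ|` for `|θ| ≤ M` and `λ(θ² + M²)/(2M)` for `|θ| > M`. -/
theorem berhu_penalty_from_threshold (lam M : ℝ) (hlam : 0 < lam) (hM : 0 < M) (θ : ℝ) :
    (∫ u in (0:ℝ)..|θ|, (sSup {s : ℝ | thetaB lam M s ≤ u} - u))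
      = if |θ| ≤ M then lam * |θ| else lam * (θ ^ 2 + M ^ 2) / (2 * M) := by
  have hθ : 0 ≤ |θ| := abs_nonneg θ
  calc (∫ u in (0:ℝ)..|θ|, (sSup {s : ℝ | thetaB lam M s ≤ u} - u))
      = ∫ u in (0:ℝ)..|θ|, lam * max 1 (u / M) := by
        refine integral_congr fun u hu => ?_
        rw [Set.uIcc_of_le hθ] at hu
        exact sSup_thetaB_le_sub hlam.le hM hu.1
    _ = _ := by
        rw [integral_const_mul, integral_max_one_div hM hθ, sq_abs]
        split_ifs <;> ring
end

section
/- (Penalty associated with the hard-ridge threshold) Let λ > 0 and η ≥ 0, and let Θ_HR(t;λ,η) = 0 if |t| < λ and t/(1+η) if |t| ≥ λ. Then for every θ ∈ ℝ, ∫₀^{|θ|} (sup{s : Θ_HR(s;λ,η) ≤ u} − u) du equals −θ²/2 + λ|θ| if |θ| < λ/(1+η), and equals ηθ²/2 + λ²/(2(1+η)) if |θ| ≥ λ/(1+η). -/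
/-- The hard-ridge thresholding rule `Θ_HR(t;λ,η)`. -/
noncomputable def thetaHR (lam η t : ℝ) : ℝ := if |t| < lam then 0 else t / (1 + η)

lemma thetaHR_sSup (lam η u : ℝ) (hlam : 0 < lam) (hη : 0 ≤ η) (hu : 0 ≤ u) :
    sSup {s : ℝ | thetaHR lam η s ≤ u} = max lam ((1 + η) * u) := by
  have h1 : (0:ℝ) < 1 + η := by linarith
  by_cases hc : (1 + η) * u < lam
  · have hset : {s : ℝ | thetaHR lam η s ≤ u} = Set.Iio lam := by
      ext s
      simp only [Set.mem_setOf_eq, Set.mem_Iio, thetaHR]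
      constructor
      · intro h
        by_contra hs
        push_neg at hs
        have habs : ¬ |s| < lam := by
          rw [abs_of_nonneg (le_trans hlam.le hs)]; linarith
        rw [if_neg habs] at h
        have : s ≤ (1 + η) * u := by
          rw [div_le_iff₀ h1] at h; linarith [h]
        linarith
      · intro hs
        by_cases habs : |s| < lam
        · rw [if_pos habs]; exact hu
        · rw [if_neg habs]
          push_neg at habs
          have hsneg : s ≤ -lam := by
            rcases abs_cases s with ⟨h1', _⟩ | ⟨h1', _⟩
            · linarith [h1' ▸ habs]
            · linarith [h1' ▸ habs]
          have : s / (1 + η) ≤ 0 := div_nonpos_of_nonpos_of_nonneg (by linarith) h1.le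
          linarith
    rw [hset, csSup_Iio, max_eq_left hc.le]
  · push_neg at hc
    have hset : {s : ℝ | thetaHR lam η s ≤ u} = Set.Iic ((1 + η) * u) := by
      ext s
      simp only [Set.mem_setOf_eq, Set.mem_Iic, thetaHR]
      constructor
      · intro h
        by_contra hs
        push_neg at hs
        have hspos : lam ≤ s := le_trans hc hs.le
        have habs : ¬ |s| < lam := by
          rw [abs_of_nonneg (le_trans hlam.le hspos)]; linarith
        rw [if_neg habs, div_le_iff₀ h1] at h
        linarith
      · intro hs
        by_cases habs : |s| < lam
        · rw [if_pos habs]; exact hu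
        · rw [if_neg habs, div_le_iff₀ h1]
          linarith
    rw [hset, csSup_Iic, max_eq_right hc]

lemma int_lin (lam a b : ℝ) : ∫ u in a..b, (lam - u) = lam * (b - a) - (b ^ 2 - a ^ 2) / 2 := by
  have h : (∫ u in a..b, (lam - u)) = (∫ _u in a..b, lam) - ∫ u in a..b, u :=
    intervalIntegral.integral_sub intervalIntegrable_const
      (continuous_id.intervalIntegrable a b)
  rw [h, intervalIntegral.integral_const, integral_id]
  simp
  ring

lemma int_lin2 (η a b : ℝ) : ∫ u in a..b, η * u = η * (b ^ 2 - a ^ 2) / 2 := by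
  rw [intervalIntegral.integral_const_mul, integral_id]
  ring

/-- The penalty constructed from `Θ_HR` via `P(θ;λ) = ∫₀^{|θ|} (sup{s : Θ(s;λ) ≤ u} − u) du`
equals `−θ²/2 + λ|θ|` for `|θ| < λ/(1+η)` and `ηθ²/2 + λ²/(2(1+η))` for `|θ| ≥ λ/(1+η)`. -/
theorem hard_ridge_penalty_from_threshold (lam η : ℝ) (hlam : 0 < lam) (hη : 0 ≤ η) (θ : ℝ) :
    (∫ u in (0:ℝ)..|θ|, (sSup {s : ℝ | thetaHR lam η s ≤ u} - u))
      = if |θ| < lam / (1 + η) then -θ ^ 2 / 2 + lam * |θ|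
        else η * θ ^ 2 / 2 + lam ^ 2 / (2 * (1 + η)) := by
  have h1 : (0:ℝ) < 1 + η := by linarith
  set T := |θ| with hT
  have hT0 : 0 ≤ T := abs_nonneg θ
  have hcong : (∫ u in (0:ℝ)..T, (sSup {s : ℝ | thetaHR lam η s ≤ u} - u))
      = ∫ u in (0:ℝ)..T, (max lam ((1 + η) * u) - u) := by
    apply intervalIntegral.integral_congr
    intro u hu
    rw [Set.uIcc_of_le hT0] at hu
    show sSup {s : ℝ | thetaHR lam η s ≤ u} - u = max lam ((1 + η) * u) - u
    rw [thetaHR_sSup lam η u hlam hη hu.1]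
  rw [hcong]
  have hcontmax : Continuous fun u : ℝ => max lam ((1 + η) * u) - u :=
    (continuous_const.max (by continuity)).sub continuous_id
  by_cases hθ : T < lam / (1 + η)
  · rw [if_pos hθ]
    have heq : (∫ u in (0:ℝ)..T, (max lam ((1 + η) * u) - u))
        = ∫ u in (0:ℝ)..T, (lam - u) := by
      apply intervalIntegral.integral_congr
      intro u hu
      rw [Set.uIcc_of_le hT0] at hu
      have : (1 + η) * u ≤ lam := by
        have := hu.2
        have : (1 + η) * u < (1 + η) * (lam / (1 + η)) := by
          rcases lt_or_eq_of_le hu.2 with h | h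
          · exact mul_lt_mul_of_pos_left (lt_trans h hθ) h1
          · rw [h]; exact mul_lt_mul_of_pos_left hθ h1
        rw [mul_div_cancel₀ _ h1.ne'] at this
        linarith
      show max lam ((1 + η) * u) - u = lam - u
      simp [max_eq_left this]
    rw [heq, int_lin]
    have hTsq : T ^ 2 = θ ^ 2 := sq_abs θ
    rw [← hTsq]
    ring
  · rw [if_neg hθ]
    push_neg at hθ
    set c := lam / (1 + η) with hc
    have hc0 : 0 ≤ c := le_of_lt (div_pos hlam h1)
    have hccl : (1 + η) * c = lam := by
      rw [hc, mul_div_cancel₀ _ h1.ne']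
    have hsplit : (∫ u in (0:ℝ)..T, (max lam ((1 + η) * u) - u))
        = (∫ u in (0:ℝ)..c, (max lam ((1 + η) * u) - u))
          + ∫ u in c..T, (max lam ((1 + η) * u) - u) := by
      rw [intervalIntegral.integral_add_adjacent_intervals
        (hcontmax.intervalIntegrable _ _) (hcontmax.intervalIntegrable _ _)]
    rw [hsplit]
    have h1eq : (∫ u in (0:ℝ)..c, (max lam ((1 + η) * u) - u))
        = ∫ u in (0:ℝ)..c, (lam - u) := by
      apply intervalIntegral.integral_congr
      intro u hu
      rw [Set.uIcc_of_le hc0] at hu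
      have : (1 + η) * u ≤ lam := by
        calc (1 + η) * u ≤ (1 + η) * c := mul_le_mul_of_nonneg_left hu.2 h1.le
        _ = lam := hccl
      show max lam ((1 + η) * u) - u = lam - u
      simp [max_eq_left this]
    have h2eq : (∫ u in c..T, (max lam ((1 + η) * u) - u))
        = ∫ u in c..T, η * u := by
      apply intervalIntegral.integral_congr
      intro u hu
      rw [Set.uIcc_of_le hθ] at hu
      have : lam ≤ (1 + η) * u := by
        calc lam = (1 + η) * c := hccl.symm
        _ ≤ (1 + η) * u := mul_le_mul_of_nonneg_left hu.1 h1.le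
      show max lam ((1 + η) * u) - u = η * u
      rw [max_eq_right this]
      ring
    rw [h1eq, h2eq, int_lin, int_lin2]
    have hTsq : T ^ 2 = θ ^ 2 := sq_abs θ
    rw [← hTsq, hc]
    field_simp
    ring
end
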